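/- For n ≥ 2 and any k ≥ 0, the pointwise inequality |∇_{(k)} A|² ≤ ((2n-1)/(n-1)) |∇_{(k)} A°|² holds, where ∇_{(k)} denotes the k-th iterated covariant derivative. -/
import Mathlib


open scoped BigOperators RealInnerProductSpace


section Aux
variable {E : Type*} [NormedAddCommGroup E] [InnerProductSpace ℝ E]

private lemma inner_ite_right' (p : Prop) [Decidable p] (x y : E) :
    ⟪x, (if p then y else 0)⟫ = if p then ⟪x, y⟫ else 0 := by
  split <;> simp

private lemma inner_ite_ite (p q : Prop) [Decidable p] [Decidable q] (x y : E) :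
    ⟪(if p then x else 0), (if q then y else 0)⟫
      = if p then (if q then ⟪x, y⟫ else 0) else 0 := by
  split <;> split <;> simp

private lemma norm_ite_sq (p : Prop) [Decidable p] (x : E) :
    ‖(if p then x else (0:E))‖ ^ 2 = if p then ‖x‖ ^ 2 else 0 := by
  split <;> simp

private lemma expand4 (a b1 b2 b3 : E) :
    ‖a - (b1 + b2 + b3)‖ ^ 2
      = ‖a‖ ^ 2 - 2 * ⟪a, b1⟫ - 2 * ⟪a, b2⟫ - 2 * ⟪a, b3⟫
        + ‖b1‖ ^ 2 + ‖b2‖ ^ 2 + ‖b3‖ ^ 2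
        + 2 * ⟪b1, b2⟫ + 2 * ⟪b1, b3⟫ + 2 * ⟪b2, b3⟫ := by
  simp only [← real_inner_self_eq_norm_sq, inner_sub_left, inner_sub_right,
    inner_add_left, inner_add_right]
  rw [real_inner_comm b1 a, real_inner_comm b2 a, real_inner_comm b3 a,
    real_inner_comm b2 b1, real_inner_comm b3 b1, real_inner_comm b3 b2]
  ring

set_option maxHeartbeats 1000000 in
private lemma key_slice (n : ℕ) (hn : 2 ≤ n) (t : Fin n → Fin n → Fin n → E)
    (h1 : ∀ i j k, t i j k = t j i k) (h2 : ∀ i j k, t i j k = t i k j)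
    (r : Fin n → E) (hr : ∀ i, r i = ∑ j, t i j j)
    (o : Fin n → Fin n → Fin n → E)
    (ho : ∀ i j k, o i j k = t i j k - (if j = k then (1 / (n : ℝ)) • r i else 0)) :
    ∑ i : Fin n, ∑ j : Fin n, ∑ k : Fin n, ‖t i j k‖ ^ 2
      ≤ ((2 * (n : ℝ) - 1) / ((n : ℝ) - 1)) * ∑ i : Fin n, ∑ j : Fin n, ∑ k : Fin n, ‖o i j k‖ ^ 2 := by
  have hn0 : (0:ℝ) < (n:ℝ) := by positivity
  have hn2 : (2:ℝ) ≤ (n:ℝ) := by exact_mod_cast hn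
  -- trace identities using the full symmetry
  have trA : ∀ k, (∑ i, t i i k) = r k := by
    intro k; rw [hr]
    exact Finset.sum_congr rfl fun i _ => by rw [h2 i i k, h1 i k i]
  have trB : ∀ j, (∑ i, t i j i) = r j := by
    intro j; rw [hr]
    exact Finset.sum_congr rfl fun i _ => by rw [h1 i j i]
  have hrr : ∀ i, (∑ j, ⟪t i j j, r i⟫) = ‖r i‖ ^ 2 := by
    intro i; rw [← sum_inner, ← hr, real_inner_self_eq_norm_sq]
  -- abbreviations
  set S2 := ∑ i : Fin n, ∑ j : Fin n, ∑ k : Fin n, ‖t i j k‖ ^ 2 with hS2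
  set Str := ∑ i, ‖r i‖ ^ 2 with hStr
  set So := ∑ i : Fin n, ∑ j : Fin n, ∑ k : Fin n, ‖o i j k‖ ^ 2 with hSo
  have hStr0 : 0 ≤ Str := Finset.sum_nonneg fun _ _ => by positivity
  have hS20 : 0 ≤ S2 := Finset.sum_nonneg fun _ _ =>
    Finset.sum_nonneg fun _ _ => Finset.sum_nonneg fun _ _ => by positivity
  -- the nine component sums
  have hT1 : (∑ i : Fin n, ∑ j : Fin n, ∑ k : Fin n, ⟪t i j k, (if i = j then r k else 0)⟫) = Str := by
    simp only [inner_ite_right', Finset.sum_ite_irrel, Finset.sum_const_zero,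
      Finset.sum_ite_eq, Finset.mem_univ, if_true]
    rw [Finset.sum_comm]
    exact Finset.sum_congr rfl fun k _ => by
      rw [← sum_inner, trA, real_inner_self_eq_norm_sq]
  have hT2 : (∑ i : Fin n, ∑ j : Fin n, ∑ k : Fin n, ⟪t i j k, (if i = k then r j else 0)⟫) = Str := by
    simp only [inner_ite_right', Finset.sum_ite_eq, Finset.mem_univ, if_true]
    rw [Finset.sum_comm]
    exact Finset.sum_congr rfl fun j _ => by
      rw [← sum_inner, trB, real_inner_self_eq_norm_sq]
  have hT3 : (∑ i : Fin n, ∑ j : Fin n, ∑ k : Fin n, ⟪t i j k, (if j = k then r i else 0)⟫) = Str := by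
    simp only [inner_ite_right', Finset.sum_ite_eq, Finset.mem_univ, if_true]
    exact Finset.sum_congr rfl fun i _ => hrr i
  have hN1 : (∑ i : Fin n, ∑ j : Fin n, ∑ k : Fin n, ‖(if i = j then r k else (0:E))‖ ^ 2) = (n:ℝ) * Str := by
    simp only [norm_ite_sq, Finset.sum_ite_irrel, Finset.sum_const_zero,
      Finset.sum_ite_eq, Finset.mem_univ, if_true]
    simp [hStr, Finset.sum_const, nsmul_eq_mul, Finset.card_univ]
  have hN2 : (∑ i : Fin n, ∑ j : Fin n, ∑ k : Fin n, ‖(if i = k then r j else (0:E))‖ ^ 2) = (n:ℝ) * Str := by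
    simp only [norm_ite_sq, Finset.sum_ite_eq, Finset.mem_univ, if_true]
    simp [hStr, Finset.sum_const, nsmul_eq_mul, Finset.card_univ]
  have hN3 : (∑ i : Fin n, ∑ j : Fin n, ∑ k : Fin n, ‖(if j = k then r i else (0:E))‖ ^ 2) = (n:ℝ) * Str := by
    simp only [norm_ite_sq, Finset.sum_ite_eq, Finset.mem_univ, if_true]
    simp [hStr, Finset.sum_const, nsmul_eq_mul, Finset.card_univ, Finset.mul_sum]
  have hC12 : (∑ i : Fin n, ∑ j : Fin n, ∑ k : Fin n,
      ⟪(if i = j then r k else (0:E)), (if i = k then r j else 0)⟫) = Str := by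
    simp only [inner_ite_ite, Finset.sum_ite_irrel, Finset.sum_const_zero,
      Finset.sum_ite_eq, Finset.mem_univ, if_true]
    exact Finset.sum_congr rfl fun i _ => by rw [real_inner_self_eq_norm_sq]
  have hC13 : (∑ i : Fin n, ∑ j : Fin n, ∑ k : Fin n,
      ⟪(if i = j then r k else (0:E)), (if j = k then r i else 0)⟫) = Str := by
    simp only [inner_ite_ite, Finset.sum_ite_irrel, Finset.sum_const_zero,
      Finset.sum_ite_eq, Finset.mem_univ, if_true]
    exact Finset.sum_congr rfl fun i _ => by rw [real_inner_comm, real_inner_self_eq_norm_sq]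
  have hC23 : (∑ i : Fin n, ∑ j : Fin n, ∑ k : Fin n,
      ⟪(if i = k then r j else (0:E)), (if j = k then r i else 0)⟫) = Str := by
    have : ∀ i j, (∑ k, ⟪(if i = k then r j else (0:E)), (if j = k then r i else 0)⟫)
        = if j = i then ⟪r j, r i⟫ else 0 := by
      intro i j
      simp only [inner_ite_ite]
      rw [Finset.sum_eq_single i]
      · simp
      · intro b _ hb; simp [Ne.symm hb]  -- condition i = b false
      · simp
    simp only [this, Finset.sum_ite_eq', Finset.mem_univ, if_true]
    exact Finset.sum_congr rfl fun i _ => by rw [real_inner_self_eq_norm_sq]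
  -- the nonnegative square sum
  have hQexp : (∑ i : Fin n, ∑ j : Fin n, ∑ k : Fin n,
      ‖((n:ℝ)+2) • t i j k - ((if i = j then r k else 0) + (if i = k then r j else 0)
          + (if j = k then r i else 0))‖ ^ 2)
      = ((n:ℝ)+2)^2 * S2 - 3*((n:ℝ)+2) * Str := by
    have hc : ‖(n:ℝ)+2‖ = (n:ℝ)+2 := by rw [Real.norm_eq_abs, abs_of_pos]; positivity
    calc (∑ i : Fin n, ∑ j : Fin n, ∑ k : Fin n, ‖((n:ℝ)+2) • t i j k - ((if i = j then r k else 0)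
            + (if i = k then r j else 0) + (if j = k then r i else 0))‖ ^ 2)
        = ∑ i : Fin n, ∑ j : Fin n, ∑ k : Fin n, (((n:ℝ)+2)^2 * ‖t i j k‖ ^ 2
            - 2*(((n:ℝ)+2) * ⟪t i j k, (if i = j then r k else 0)⟫)
            - 2*(((n:ℝ)+2) * ⟪t i j k, (if i = k then r j else 0)⟫)
            - 2*(((n:ℝ)+2) * ⟪t i j k, (if j = k then r i else 0)⟫)
            + ‖(if i = j then r k else (0:E))‖ ^ 2
            + ‖(if i = k then r j else (0:E))‖ ^ 2
            + ‖(if j = k then r i else (0:E))‖ ^ 2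
            + 2*⟪(if i = j then r k else (0:E)), (if i = k then r j else 0)⟫
            + 2*⟪(if i = j then r k else (0:E)), (if j = k then r i else 0)⟫
            + 2*⟪(if i = k then r j else (0:E)), (if j = k then r i else 0)⟫) := by
          refine Finset.sum_congr rfl fun i _ => Finset.sum_congr rfl fun j _ =>
            Finset.sum_congr rfl fun k _ => ?_
          rw [expand4, norm_smul, real_inner_smul_left, real_inner_smul_left,
            real_inner_smul_left, hc, mul_pow]
      _ = ((n:ℝ)+2)^2 * S2 - 3*((n:ℝ)+2) * Str := by
          simp only [Finset.sum_add_distrib, Finset.sum_sub_distrib, ← Finset.mul_sum]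
          rw [hT1, hT2, hT3, hN1, hN2, hN3, hC12, hC13, hC23]
          ring
  have hQ0 : 0 ≤ ((n:ℝ)+2)^2 * S2 - 3*((n:ℝ)+2) * Str := by
    rw [← hQexp]
    exact Finset.sum_nonneg fun _ _ => Finset.sum_nonneg fun _ _ =>
      Finset.sum_nonneg fun _ _ => by positivity
  have hkey : 3 * Str ≤ ((n:ℝ)+2) * S2 := by nlinarith
  -- the norm identity  So = S2 - Str / n
  have hSoId : So = S2 - (1/(n:ℝ)) * Str := by
    have hA1 : (∑ i : Fin n, ∑ j : Fin n, ∑ k : Fin n, ⟪t i j k, (if j = k then (1/(n:ℝ)) • r i else 0)⟫)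
        = (1/(n:ℝ)) * Str := by
      simp only [inner_ite_right', Finset.sum_ite_eq, Finset.mem_univ, if_true,
        real_inner_smul_right]
      rw [hStr, Finset.mul_sum]
      exact Finset.sum_congr rfl fun i _ => by rw [← Finset.mul_sum, hrr]
    have hA2 : (∑ i : Fin n, ∑ j : Fin n, ∑ k : Fin n, ‖(if j = k then (1/(n:ℝ)) • r i else (0:E))‖ ^ 2)
        = (1/(n:ℝ)) * Str := by
      simp only [norm_ite_sq, Finset.sum_ite_eq, Finset.mem_univ, if_true, norm_smul,
        mul_pow]
      have : ‖(1/(n:ℝ))‖ ^ 2 = 1/(n:ℝ)^2 := by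
        rw [Real.norm_eq_abs, abs_of_pos (by positivity)]; ring
      simp only [this]
      rw [hStr, Finset.mul_sum]
      refine Finset.sum_congr rfl fun i _ => ?_
      rw [Finset.sum_const, Finset.card_univ, Fintype.card_fin, nsmul_eq_mul]
      field_simp
    calc So = ∑ i : Fin n, ∑ j : Fin n, ∑ k : Fin n, (‖t i j k‖ ^ 2
          - 2 * ⟪t i j k, (if j = k then (1/(n:ℝ)) • r i else 0)⟫
          + ‖(if j = k then (1/(n:ℝ)) • r i else (0:E))‖ ^ 2) := by
          rw [hSo]
          refine Finset.sum_congr rfl fun i _ => Finset.sum_congr rfl fun j _ =>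
            Finset.sum_congr rfl fun k _ => ?_
          rw [ho, norm_sub_sq_real]
      _ = S2 - (1/(n:ℝ)) * Str := by
          simp only [Finset.sum_add_distrib, Finset.sum_sub_distrib, ← Finset.mul_sum]
          rw [hA1, hA2, hS2]
          ring
  -- conclusion
  have ha : (2*(n:ℝ)-1) * (3 * Str) ≤ (2*(n:ℝ)-1) * (((n:ℝ)+2) * S2) :=
    mul_le_mul_of_nonneg_left hkey (by linarith)
  have hc : (0:ℝ) ≤ ((n:ℝ)-1)*((n:ℝ)-2)*S2 :=
    mul_nonneg (mul_nonneg (by linarith) (by linarith)) hS20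
  have h3 : (2*(n:ℝ)-1) * Str ≤ (n:ℝ)^2 * S2 := by nlinarith [ha, hc]
  have h5 : (2*(n:ℝ)-1)*Str/(n:ℝ) ≤ (n:ℝ)*S2 := by
    rw [div_le_iff₀ hn0]; nlinarith [h3]
  have hmain : S2*((n:ℝ)-1) ≤ (2*(n:ℝ)-1)*(S2 - (1/(n:ℝ))*Str) := by
    have e : (2*(n:ℝ)-1)*(S2 - (1/(n:ℝ))*Str) = (2*(n:ℝ)-1)*S2 - ((2*(n:ℝ)-1)*Str)/(n:ℝ) := by
      ring
    rw [e]; nlinarith [h5]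
  rw [div_mul_eq_mul_div, le_div_iff₀ (by linarith)]
  rw [hSoId]
  linarith [hmain]
end Aux


/-- For `n ≥ 2` and any `k ≥ 0`, the pointwise inequality
`|∇_{(k)} A|² ≤ ((2n-1)/(n-1)) |∇_{(k)} A°|²` holds.  The `k`-th covariant derivative
of the second fundamental form is modelled by its components `T m i j k`, where `m`
ranges over an arbitrary finite multi-index type `ι` (the first `k-1` derivative slots)
and the last three indices carry the Codazzi symmetries; `To` is the corresponding
derivative of the tracefree part `A° = A - (1/n) H g` (orthonormal frame). -/
theorem deriv_A_controlled_by_deriv_tracefree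
    {E ι : Type*} [NormedAddCommGroup E] [InnerProductSpace ℝ E] [Fintype ι]
    (n : ℕ) (hn : 2 ≤ n)
    (T : ι → Fin n → Fin n → Fin n → E)
    (hsym₁ : ∀ m i j k, T m i j k = T m j i k)
    (hsym₂ : ∀ m i j k, T m i j k = T m i k j)
    (Tr : ι → Fin n → E) (hTr : ∀ m i, Tr m i = ∑ j, T m i j j)
    (To : ι → Fin n → Fin n → Fin n → E)
    (hTo : ∀ m i j k, To m i j k = T m i j k - (if j = k then (1 / (n : ℝ)) • Tr m i else 0)) :
    ∑ m, ∑ i, ∑ j, ∑ k, ‖T m i j k‖ ^ 2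
      ≤ ((2 * (n : ℝ) - 1) / ((n : ℝ) - 1)) * ∑ m, ∑ i, ∑ j, ∑ k, ‖To m i j k‖ ^ 2 := by
  rw [Finset.mul_sum]
  exact Finset.sum_le_sum fun m _ =>
    key_slice n hn (T m) (hsym₁ m) (hsym₂ m) (Tr m) (hTr m) (To m) (hTo m)
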